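/- arXiv:2507.03691 — 3 statements merged into one kernel-verified Lean document; each statement's English description precedes it below -/
import Mathlib

section
/- The sum of all combination technique coefficients over an admissible nonempty multi-index set equals 1: Σ_{𝛽∈Λ} c_𝛽 = 1. -/
/-- Combination technique coefficient of a multi-index `β` in a multi-index set `Λ`. -/
def combCoeff {N : ℕ} (Λ : Finset (Fin N → ℕ)) (β : Fin N → ℕ) : ℤ :=
  ∑ ν : Fin N → Bool,
    if (fun i => β i + (if ν i then 1 else 0)) ∈ Λ then
      (-1 : ℤ) ^ (Finset.univ.filter (fun i => ν i = true)).card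
    else 0

open Finset


lemma subFinset_mem {N : ℕ} (Λ : Finset (Fin N → ℕ))
    (hdc : ∀ β ∈ Λ, ∀ i : Fin N, 1 < β i →
      (fun j => β j - (if j = i then 1 else 0)) ∈ Λ)
    (s : Finset (Fin N)) :
    ∀ γ ∈ Λ, (∀ i ∈ s, 2 ≤ γ i) →
      (fun j => γ j - if j ∈ s then 1 else 0) ∈ Λ := by
  induction s using Finset.induction_on with
  | empty => intro γ hγ _; simpa using hγ
  | @insert a s ha ih =>
    intro γ hγ hs
    have hβ : (fun j => γ j - if j ∈ s then 1 else 0) ∈ Λ :=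
      ih γ hγ (fun i hi => hs i (Finset.mem_insert_of_mem hi))
    have h2 : 2 ≤ γ a := hs a (Finset.mem_insert_self a s)
    have := hdc _ hβ a (by simp [ha]; omega)
    convert this using 1
    funext j
    by_cases hj : j = a
    · subst hj; simp [ha]
    · simp [hj, Finset.mem_insert]

lemma sign_prod {N : ℕ} (ν : Fin N → Bool) :
    (∏ i, (if ν i then (-1 : ℤ) else 1)) =
      (-1 : ℤ) ^ (Finset.univ.filter (fun i => ν i = true)).card := by
  classical
  rw [← Finset.prod_filter_mul_prod_filter_not Finset.univ (fun i => ν i = true)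
        (fun i => if ν i then (-1 : ℤ) else 1)]
  have h1 : ∀ i ∈ Finset.univ.filter (fun i => ν i = true),
      (if ν i then (-1 : ℤ) else 1) = -1 := by intro i hi; simp at hi; simp [hi]
  have h2 : ∀ i ∈ Finset.univ.filter (fun i => ¬ ν i = true),
      (if ν i then (-1 : ℤ) else 1) = 1 := by intro i hi; simp at hi; simp [hi]
  rw [Finset.prod_congr rfl h1, Finset.prod_congr rfl h2, Finset.prod_const,
      Finset.prod_const, one_pow, mul_one]

/-- the combination technique coefficients of a nonempty
downward-closed multi-index set sum to one. -/
theorem sum_combCoeff_eq_one {N : ℕ} (Λ : Finset (Fin N → ℕ))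
    (hone : (fun _ => 1) ∈ Λ)
    (hpos : ∀ β ∈ Λ, ∀ i, 1 ≤ β i)
    (hdc : ∀ β ∈ Λ, ∀ i : Fin N, 1 < β i →
      (fun j => β j - (if j = i then 1 else 0)) ∈ Λ) :
    ∑ β ∈ Λ, combCoeff Λ β = 1 := by
  classical
  unfold combCoeff
  rw [Finset.sum_comm]
  have step2 : ∀ ν : Fin N → Bool,
      (∑ β ∈ Λ, if (fun i => β i + (if ν i then 1 else 0)) ∈ Λ then
        (-1 : ℤ) ^ (Finset.univ.filter (fun i => ν i = true)).card else 0)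
      = ∑ γ ∈ Λ, if (∀ i, ν i = true → 2 ≤ γ i) then
        (-1 : ℤ) ^ (Finset.univ.filter (fun i => ν i = true)).card else 0 := by
    intro ν
    rw [← Finset.sum_filter, ← Finset.sum_filter, Finset.sum_const, Finset.sum_const]
    congr 1
    refine Finset.card_bij' (fun β _ => fun i => β i + if ν i then 1 else 0)
      (fun γ _ => fun i => γ i - if ν i then 1 else 0) ?_ ?_ ?_ ?_
    · intro β hβ
      simp only [Finset.mem_filter] at hβ ⊢
      refine ⟨hβ.2, fun i hi => ?_⟩
      have := hpos β hβ.1 i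
      simp [hi]; omega
    · intro γ hγ
      simp only [Finset.mem_filter] at hγ ⊢
      obtain ⟨hγΛ, hγ2⟩ := hγ
      have hmem : (fun j => γ j - if ν j then 1 else 0) ∈ Λ := by
        have := subFinset_mem Λ hdc (Finset.univ.filter (fun i => ν i = true)) γ hγΛ
          (by intro i hi; simp at hi; exact hγ2 i hi)
        convert this using 1
        funext j; simp
      refine ⟨hmem, ?_⟩
      convert hγΛ using 1
      funext j
      by_cases hj : ν j
      · have := hγ2 j hj; simp [hj]; omega
      · simp [hj]
    · intro β hβ
      funext j; simp
    · intro γ hγ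
      simp only [Finset.mem_filter] at hγ
      funext j
      by_cases hj : ν j
      · have := hγ.2 j hj; simp [hj]; omega
      · simp [hj]
  rw [Finset.sum_congr rfl (fun ν _ => step2 ν), Finset.sum_comm]
  have step4 : ∀ γ ∈ Λ,
      (∑ ν : Fin N → Bool, if (∀ i, ν i = true → 2 ≤ γ i) then
        (-1 : ℤ) ^ (Finset.univ.filter (fun i => ν i = true)).card else 0)
      = if γ = (fun _ => 1) then 1 else 0 := by
    intro γ hγ
    have hprod : ∀ ν : Fin N → Bool,
        (if (∀ i, ν i = true → 2 ≤ γ i) then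
          (-1 : ℤ) ^ (Finset.univ.filter (fun i => ν i = true)).card else 0)
        = ∏ i, (if (ν i = true → 2 ≤ γ i) then (if ν i then (-1 : ℤ) else 1) else 0) := by
      intro ν
      by_cases hc : ∀ i, ν i = true → 2 ≤ γ i
      · rw [if_pos hc, Finset.prod_congr rfl (fun i _ => if_pos (hc i)), sign_prod]
      · rw [if_neg hc]
        push_neg at hc
        obtain ⟨i, hi1, hi2⟩ := hc
        exact (Finset.prod_eq_zero (Finset.mem_univ i) (by simp [hi1, hi2])).symm
    rw [Finset.sum_congr rfl (fun ν _ => hprod ν)]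
    rw [← Fintype.prod_sum
      (fun i (b : Bool) => if (b = true → 2 ≤ γ i) then (if b then (-1 : ℤ) else 1) else 0)]
    have hfac : ∀ i, (∑ b : Bool, if (b = true → 2 ≤ γ i) then (if b then (-1 : ℤ) else 1) else 0)
        = if 2 ≤ γ i then 0 else 1 := by
      intro i
      rw [Fintype.sum_bool]
      by_cases h : 2 ≤ γ i <;> simp [h]
    rw [Finset.prod_congr rfl (fun i _ => hfac i)]
    by_cases hγ1 : γ = (fun _ => 1)
    · subst hγ1; simp
    · rw [if_neg hγ1]
      have : ∃ i, γ i ≠ 1 := by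
        by_contra h; push_neg at h; exact hγ1 (funext h)
      obtain ⟨i, hi⟩ := this
      have h1 := hpos γ hγ i
      exact Finset.prod_eq_zero (Finset.mem_univ i) (by rw [if_pos (by omega)])
  rw [Finset.sum_congr rfl step4, Finset.sum_ite_eq' Λ (fun _ => 1) (fun _ => (1 : ℤ)), if_pos hone]
end

section
/- If Λ ⊂ ℕ^N is a nonempty finite downward-closed multi-index set strictly contained in another downward-closed set Λ', then the reduced margin R(Λ) intersected with Λ' is nonempty; in particular the reduced margin of a finite downward-closed proper subset of ℕ^N is nonempty. -/
def DownwardClosed {N : ℕ} (Λ : Set (Fin N → ℕ)) : Prop :=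
  ∀ β ∈ Λ, ∀ i : Fin N, 1 < β i → (fun j => β j - (if j = i then 1 else 0)) ∈ Λ

def ReducedMargin {N : ℕ} (Λ : Set (Fin N → ℕ)) : Set (Fin N → ℕ) :=
  {μ | μ ∉ Λ ∧ (∀ i, 1 ≤ μ i) ∧
    ∀ i : Fin N, 1 < μ i → (fun j => μ j - (if j = i then 1 else 0)) ∈ Λ}

lemma reducedMargin_aux {N : ℕ} (Λ Λ' : Set (Fin N → ℕ))
    (hΛ'ge : ∀ β ∈ Λ', ∀ i, 1 ≤ β i)
    (hdc' : DownwardClosed Λ') (hss : Λ ⊂ Λ') :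
    (ReducedMargin Λ ∩ Λ').Nonempty := by
  classical
  obtain ⟨μ0, hμ0', hμ0⟩ := Set.exists_of_ssubset hss
  have hT : ∃ n, ∃ μ, μ ∈ Λ' ∧ μ ∉ Λ ∧ (∑ i, μ i) = n := ⟨_, μ0, hμ0', hμ0, rfl⟩
  obtain ⟨μ, hμΛ', hμΛ, hsum⟩ := Nat.find_spec hT
  refine ⟨μ, ⟨hμΛ, fun i => hΛ'ge μ hμΛ' i, fun i hi => ?_⟩, hμΛ'⟩
  have hd := hdc' μ hμΛ' i hi
  by_contra hnot
  have hlt : (∑ j, (μ j - if j = i then 1 else 0)) < Nat.find hT := by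
    rw [← hsum]
    refine Finset.sum_lt_sum (fun j _ => by omega) ⟨i, Finset.mem_univ i, ?_⟩
    simp only [if_true, eq_self_iff_true]; omega
  exact Nat.find_min hT hlt ⟨_, hd, hnot, rfl⟩

/-- if a nonempty finite downward-closed multi-index set `Λ` is
strictly contained in another downward-closed set `Λ'`, then the reduced margin
of `Λ` meets `Λ'`; in particular, the reduced margin of a finite
downward-closed proper subset of the set of all multi-indices (entries ≥ 1)
is nonempty. -/
theorem reducedMargin_inter_nonempty {N : ℕ} :
    (∀ Λ Λ' : Set (Fin N → ℕ), Λ.Finite → Λ.Nonempty →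
      (∀ β ∈ Λ, ∀ i, 1 ≤ β i) → (∀ β ∈ Λ', ∀ i, 1 ≤ β i) →
      DownwardClosed Λ → DownwardClosed Λ' →
      Λ ⊂ Λ' → (ReducedMargin Λ ∩ Λ').Nonempty) ∧
    (∀ Λ : Set (Fin N → ℕ), Λ.Finite → Λ.Nonempty →
      (∀ β ∈ Λ, ∀ i, 1 ≤ β i) → DownwardClosed Λ →
      Λ ≠ {β | ∀ i, 1 ≤ β i} → (ReducedMargin Λ).Nonempty) := by
  constructor
  · intro Λ Λ' _ _ _ hΛ'ge _ hdc' hss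
    exact reducedMargin_aux Λ Λ' hΛ'ge hdc' hss
  · intro Λ _ _ hge _ hneq
    have hdc' : DownwardClosed {β : Fin N → ℕ | ∀ i, 1 ≤ β i} := by
      intro β hβ i hi j
      have := hβ j
      by_cases h : j = i <;> simp [h] <;> omega
    have hss : Λ ⊂ {β : Fin N → ℕ | ∀ i, 1 ≤ β i} :=
      ssubset_iff_subset_ne.mpr ⟨fun β hβ => hge β hβ, hneq⟩
    obtain ⟨μ, hμ, _⟩ := reducedMargin_aux Λ _ (fun β hβ => hβ) hdc' hss
    exact ⟨μ, hμ⟩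
end

section
/- For symmetric Leja-type nested point sequences (or any nested sequence) with the linear level-to-knots rule m(ℓ) = ℓ, the sparse grid operator I_Λ with Λ = {β ∈ ℕ^n : ‖β‖₁ ≤ n + w} is exact on all polynomials of total degree ≤ w: the underlying polynomial space 𝒫_Λ contains the total-degree space { Π y_i^{p_i} : ‖p‖₁ ≤ w }. -/
open Finset

private lemma card_shift (n w : ℕ) (Λ : Finset (Fin n → ℕ))
    (hΛ : ∀ β : Fin n → ℕ, β ∈ Λ ↔ ((∀ i, 1 ≤ β i) ∧ ∑ i, β i ≤ n + w))
    (κ : Fin n → ℕ) (hκ : ∀ i, 1 ≤ κ i) (ν : Fin n → Bool) :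
    (Λ.filter fun β => (∀ i, κ i ≤ β i) ∧ (fun i => β i + (if ν i then 1 else 0)) ∈ Λ).card
      = (Λ.filter fun γ => ∀ i, κ i + (if ν i then 1 else 0) ≤ γ i).card := by
  refine Finset.card_bij' (fun β _ => fun i => β i + (if ν i then 1 else 0))
    (fun γ _ => fun i => γ i - (if ν i then 1 else 0)) ?_ ?_ ?_ ?_
  · intro β hβ
    rw [mem_filter] at hβ ⊢
    obtain ⟨hβΛ, hκβ, hshift⟩ := hβ
    exact ⟨hshift, fun i => by cases h : ν i <;> simp [h] <;> exact hκβ i⟩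
  · intro γ hγ
    rw [mem_filter] at hγ ⊢
    obtain ⟨hγΛ, hγge⟩ := hγ
    have hγn := (hΛ γ).mp hγΛ
    have hfun : (fun i => (γ i - (if ν i then 1 else 0)) + (if ν i then 1 else 0)) = γ := by
      funext i
      have := hγge i
      cases h : ν i <;> simp [h] at this ⊢ <;> omega
    refine ⟨(hΛ _).mpr ⟨fun i => ?_, ?_⟩, fun i => ?_, by rw [hfun]; exact hγΛ⟩
    · have h1 := hγge i; have h2 := hκ i
      cases h : ν i <;> simp [h] at h1 ⊢ <;> omega
    · calc ∑ i, (γ i - (if ν i then 1 else 0)) ≤ ∑ i, γ i :=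
            Finset.sum_le_sum fun i _ => Nat.sub_le _ _
        _ ≤ n + w := hγn.2
    · have := hγge i; cases h : ν i <;> simp [h] at this ⊢ <;> omega
  · intro β _; funext i; cases h : ν i <;> simp [h]
  · intro γ hγ
    rw [mem_filter] at hγ
    funext i
    have := hγ.2 i
    cases h : ν i <;> simp [h] at this ⊢ <;> omega

private lemma bool_pair (a c : ℕ) : (∑ b : Bool, (if b then (-1 : ℤ) else 1) *
    (if a + (if b then 1 else 0) ≤ c then 1 else 0)) = if c = a then 1 else 0 := by
  rw [Fintype.sum_bool]
  simp only [Bool.false_eq_true, if_true, if_false, ite_false, ite_true, if_neg not_false]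
  split_ifs <;> omega

private lemma key_ident (n w : ℕ) (Λ : Finset (Fin n → ℕ))
    (hΛ : ∀ β : Fin n → ℕ, β ∈ Λ ↔ ((∀ i, 1 ≤ β i) ∧ ∑ i, β i ≤ n + w))
    (κ : Fin n → ℕ) (hκ : ∀ i, 1 ≤ κ i) :
    (∑ β ∈ Λ, if (∀ i, κ i ≤ β i) then combCoeff Λ β else 0)
      = if κ ∈ Λ then 1 else 0 := by
  have step1 : (∑ β ∈ Λ, if (∀ i, κ i ≤ β i) then combCoeff Λ β else 0)
      = ∑ β ∈ Λ, ∑ ν : Fin n → Bool,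
          if ((∀ i, κ i ≤ β i) ∧ (fun i => β i + (if ν i then 1 else 0)) ∈ Λ) then
            (-1 : ℤ) ^ (Finset.univ.filter (fun i => ν i = true)).card else 0 := by
    refine Finset.sum_congr rfl fun β _ => ?_
    unfold combCoeff
    split_ifs with h
    · exact Finset.sum_congr rfl fun ν _ => by simp [h]
    · simp [h]
  rw [step1, Finset.sum_comm]
  have step2 : ∀ ν : Fin n → Bool,
      (∑ β ∈ Λ, if ((∀ i, κ i ≤ β i) ∧ (fun i => β i + (if ν i then 1 else 0)) ∈ Λ) then
          (-1 : ℤ) ^ (Finset.univ.filter (fun i => ν i = true)).card else 0)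
        = ∑ γ ∈ Λ, ∏ i, ((if ν i then (-1 : ℤ) else 1) *
            (if κ i + (if ν i then 1 else 0) ≤ γ i then 1 else 0)) := by
    intro ν
    have hsign : (∏ i, (if ν i then (-1 : ℤ) else 1))
        = ((-1 : ℤ) ^ (Finset.univ.filter (fun i => ν i = true)).card) := by
      rw [← Finset.prod_const, Finset.prod_filter]
    have hterm : ∀ γ : Fin n → ℕ,
        (∏ i, ((if ν i then (-1 : ℤ) else 1) *
            (if κ i + (if ν i then 1 else 0) ≤ γ i then 1 else 0)))
          = if (∀ i, κ i + (if ν i then 1 else 0) ≤ γ i) then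
              (-1 : ℤ) ^ (Finset.univ.filter (fun i => ν i = true)).card else 0 := by
      intro γ
      rw [Finset.prod_mul_distrib, hsign, Finset.prod_boole]
      simp only [mem_univ, forall_const, mul_ite, mul_one, mul_zero]
    rw [Finset.sum_congr rfl fun γ _ => hterm γ]
    rw [← Finset.sum_filter, ← Finset.sum_filter, Finset.sum_const, Finset.sum_const,
      card_shift n w Λ hΛ κ hκ ν]
  rw [Finset.sum_congr rfl fun ν _ => step2 ν, Finset.sum_comm]
  have step3 : ∀ γ : Fin n → ℕ,
      (∑ ν : Fin n → Bool, ∏ i, ((if ν i then (-1 : ℤ) else 1) *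
          (if κ i + (if ν i then 1 else 0) ≤ γ i then 1 else 0)))
        = if γ = κ then 1 else 0 := by
    intro γ
    have hps := Finset.prod_univ_sum (fun _ : Fin n => (Finset.univ : Finset Bool))
      (fun i b => (if b then (-1 : ℤ) else 1) *
        (if κ i + (if b then 1 else 0) ≤ γ i then 1 else 0))
    rw [Fintype.piFinset_univ] at hps
    rw [← hps]
    rw [Finset.prod_congr rfl fun i _ => bool_pair (κ i) (γ i), Finset.prod_boole]
    simp [funext_iff, eq_comm]
  rw [Finset.sum_congr rfl fun γ _ => step3 γ, Finset.sum_ite_eq' Λ κ (fun _ => 1)]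
private lemma lagrange_exact (X : Finset ℝ) (q : ℕ) (hq : q < X.card) (y : ℝ) :
    (∑ g ∈ X, g ^ q * (Lagrange.basis X id g).eval y) = y ^ q := by
  have hinj : Set.InjOn id (X : Set ℝ) := Function.injective_id.injOn
  have hdeg : (Polynomial.X ^ q : Polynomial ℝ).degree < X.card := by
    rw [Polynomial.degree_X_pow]; exact_mod_cast hq
  have h2 := Lagrange.eq_interpolate (f := Polynomial.X ^ q) hinj hdeg
  have h3 := congrArg (Polynomial.eval y) h2
  rw [Lagrange.interpolate_apply] at h3
  simpa [Polynomial.eval_finset_sum] using h3.symm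

/-- for a nested point sequence with the linear level-to-knots
rule `m(ℓ) = ℓ` (so level `ℓ` uses `ℓ` nodes), the sparse grid combination
technique operator on `Λ = {β : ‖β‖₁ ≤ n + w}` is exact on all polynomials of
total degree `≤ w`: it reproduces every monomial `Π_i y_i^{p_i}` with
`‖p‖₁ ≤ w`. -/
theorem sparse_grid_total_degree_exact (n w : ℕ) (hn : 0 < n)
    (X : ℕ → Finset ℝ)
    (hcard : ∀ ℓ : ℕ, 1 ≤ ℓ → (X ℓ).card = ℓ)
    (hnested : ∀ ℓ : ℕ, 1 ≤ ℓ → X ℓ ⊆ X (ℓ + 1))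
    (Λ : Finset (Fin n → ℕ))
    (hΛ : ∀ β : Fin n → ℕ, β ∈ Λ ↔ ((∀ i, 1 ≤ β i) ∧ ∑ i, β i ≤ n + w))
    (p : Fin n → ℕ) (hp : ∑ i, p i ≤ w) :
    ∀ y : Fin n → ℝ,
      (∑ β ∈ Λ, (combCoeff Λ β : ℝ) *
          ∑ g ∈ Fintype.piFinset (fun i => X (β i)),
            (∏ i, g i ^ p i) *
              ∏ i, (Lagrange.basis (X (β i)) id (g i)).eval (y i)) =
        ∏ i, y i ^ p i := by
  intro y
  classical
  set F : Fin n → ℕ → ℝ := fun i ℓ => if ℓ = 0 then 0 else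
    ∑ g ∈ X ℓ, g ^ p i * (Lagrange.basis (X ℓ) id g).eval (y i) with hF
  have hF0 : ∀ i, F i 0 = 0 := fun i => by simp [hF]
  have hFexact : ∀ (i : Fin n) (ℓ : ℕ), p i + 1 ≤ ℓ → F i ℓ = y i ^ p i := by
    intro i ℓ h
    have hℓ : ℓ ≠ 0 := by omega
    rw [hF]
    simp only [hℓ, if_false]
    exact lagrange_exact (X ℓ) (p i) (by rw [hcard ℓ (by omega)]; omega) (y i)
  have hpw : ∀ i, p i ≤ w := fun i => le_trans (Finset.single_le_sum (fun j _ => Nat.zero_le (p j)) (mem_univ i)) hp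
  -- K : outer box
  set K : Finset (Fin n → ℕ) := Fintype.piFinset (fun _ => Finset.range (w + 1)) with hK
  -- step A+B+C : inner tensor sum = extended telescoped sum over K
  have hstep : ∀ β ∈ Λ,
      (∑ g ∈ Fintype.piFinset (fun i => X (β i)),
        (∏ i, g i ^ p i) * ∏ i, (Lagrange.basis (X (β i)) id (g i)).eval (y i))
      = ∑ k ∈ K, if (∀ i, k i + 1 ≤ β i) then (∏ i, (F i (k i + 1) - F i (k i))) else 0 := by
    intro β hβ
    have hβ1 := ((hΛ β).mp hβ).1
    have hβ2 := ((hΛ β).mp hβ).2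
    have hβle : ∀ i, β i ≤ w + 1 := by
      intro i
      have h2 : β i + ∑ j ∈ univ.erase i, β j = ∑ j, β j := Finset.add_sum_erase _ _ (mem_univ i)
      have h3 : (univ.erase i).card ≤ ∑ j ∈ univ.erase i, β j := by
        calc (univ.erase i).card = ∑ j ∈ univ.erase i, 1 := by simp
          _ ≤ ∑ j ∈ univ.erase i, β j := Finset.sum_le_sum fun j _ => hβ1 j
      have h4 : (univ.erase i).card = n - 1 := by
        rw [Finset.card_erase_of_mem (mem_univ i), Finset.card_univ, Fintype.card_fin]
      omega
    -- A: tensor sum = ∏ F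
    have hA : (∑ g ∈ Fintype.piFinset (fun i => X (β i)),
        (∏ i, g i ^ p i) * ∏ i, (Lagrange.basis (X (β i)) id (g i)).eval (y i))
        = ∏ i, F i (β i) := by
      rw [Finset.sum_congr rfl fun g _ =>
        (Finset.prod_mul_distrib (f := fun i => g i ^ p i)
          (g := fun i => (Lagrange.basis (X (β i)) id (g i)).eval (y i))).symm]
      rw [← Finset.prod_univ_sum (fun i => X (β i))
        (fun i x => x ^ p i * (Lagrange.basis (X (β i)) id x).eval (y i))]
      refine Finset.prod_congr rfl fun i _ => ?_
      have hne : β i ≠ 0 := by have := hβ1 i; omega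
      rw [hF]
      simp only [hne, if_false]
    -- B: ∏ F = telescoped sum over small box
    have hB : (∏ i, F i (β i))
        = ∑ k ∈ Fintype.piFinset (fun i => Finset.range (β i)),
            ∏ i, (F i (k i + 1) - F i (k i)) := by
      rw [← Finset.prod_univ_sum (fun i => Finset.range (β i))
        (fun i j => F i (j + 1) - F i j)]
      refine Finset.prod_congr rfl fun i _ => ?_
      rw [Finset.sum_range_sub (fun j => F i j) (β i), hF0 i, sub_zero]
    -- C: extend to K
    have hsub : Fintype.piFinset (fun i => Finset.range (β i)) ⊆ K := by
      rw [hK]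
      exact Fintype.piFinset_subset _ _ fun i => Finset.range_subset_range.mpr (by have := hβle i; omega)
    rw [hA, hB]
    rw [show (∑ k ∈ Fintype.piFinset (fun i => Finset.range (β i)),
          ∏ i, (F i (k i + 1) - F i (k i)))
        = ∑ k ∈ Fintype.piFinset (fun i => Finset.range (β i)),
            (if (∀ i, k i + 1 ≤ β i) then (∏ i, (F i (k i + 1) - F i (k i))) else 0) from
      Finset.sum_congr rfl fun k hk => by
        rw [if_pos fun i => by
          have := (Fintype.mem_piFinset.mp hk) i
          rw [Finset.mem_range] at this
          omega]]
    refine Finset.sum_subset hsub fun k hkK hknot => ?_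
    rw [if_neg]
    intro hall
    exact hknot (Fintype.mem_piFinset.mpr fun i => Finset.mem_range.mpr (by have := hall i; omega))
  -- substitute and swap sums
  rw [Finset.sum_congr rfl fun β hβ => by rw [hstep β hβ]]
  rw [Finset.sum_congr rfl fun β (hβ : β ∈ Λ) => Finset.mul_sum _ _ ((combCoeff Λ β : ℝ))]
  rw [Finset.sum_comm]
  -- evaluate inner sum over β via key_ident
  have hinner : ∀ k ∈ K,
      (∑ β ∈ Λ, (combCoeff Λ β : ℝ) *
          (if (∀ i, k i + 1 ≤ β i) then (∏ i, (F i (k i + 1) - F i (k i))) else 0))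
      = (if (fun i => k i + 1) ∈ Λ then (1:ℝ) else 0) * ∏ i, (F i (k i + 1) - F i (k i)) := by
    intro k _
    have h1 : ∀ β : Fin n → ℕ, (combCoeff Λ β : ℝ) *
        (if (∀ i, k i + 1 ≤ β i) then (∏ i, (F i (k i + 1) - F i (k i))) else 0)
        = (if (∀ i, k i + 1 ≤ β i) then ((combCoeff Λ β : ℤ) : ℝ) else 0) *
            ∏ i, (F i (k i + 1) - F i (k i)) := by
      intro β
      split_ifs <;> ring
    rw [Finset.sum_congr rfl fun β _ => h1 β, ← Finset.sum_mul]
    congr 1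
    have hkey := key_ident n w Λ hΛ (fun i => k i + 1) (fun i => Nat.le_add_left 1 (k i))
    have : (∑ β ∈ Λ, if (∀ i, k i + 1 ≤ β i) then ((combCoeff Λ β : ℤ) : ℝ) else 0)
        = (((∑ β ∈ Λ, if (∀ i, k i + 1 ≤ β i) then combCoeff Λ β else 0) : ℤ) : ℝ) := by
      push_cast
      exact Finset.sum_congr rfl fun β _ => by split_ifs <;> simp
    rw [this, hkey]
    split_ifs <;> simp
  rw [Finset.sum_congr rfl hinner]
  -- restrict to the p-box
  set S : Finset (Fin n → ℕ) := Fintype.piFinset (fun i => Finset.range (p i + 1)) with hS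
  have hSsub : S ⊆ K := by
    rw [hS, hK]
    exact Fintype.piFinset_subset _ _ fun i => Finset.range_subset_range.mpr (by have := hpw i; omega)
  have hrestrict : (∑ k ∈ K, (if (fun i => k i + 1) ∈ Λ then (1:ℝ) else 0) *
        ∏ i, (F i (k i + 1) - F i (k i)))
      = ∑ k ∈ S, ∏ i, (F i (k i + 1) - F i (k i)) := by
    rw [← Finset.sum_subset hSsub (fun k hkK hknot => ?_)]
    · refine Finset.sum_congr rfl fun k hk => ?_
      have hk' := Fintype.mem_piFinset.mp hk
      have hmem : (fun i => k i + 1) ∈ Λ := by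
        refine (hΛ _).mpr ⟨fun i => Nat.le_add_left 1 (k i), ?_⟩
        have hsum : ∑ i, (k i + 1) ≤ ∑ i, (p i + 1) :=
          Finset.sum_le_sum fun i _ => by
            have := Finset.mem_range.mp (hk' i); omega
        have : ∑ i, (p i + 1) = (∑ i, p i) + n := by
          rw [Finset.sum_add_distrib]; simp
        omega
      rw [if_pos hmem, one_mul]
    · -- zero outside S: some k i ≥ p i + 1, so the i-th factor vanishes
      have : ∃ i, ¬ k i ∈ Finset.range (p i + 1) := by
        by_contra hall
        push_neg at hall
        exact hknot (Fintype.mem_piFinset.mpr hall)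
      obtain ⟨i, hi⟩ := this
      rw [Finset.mem_range] at hi
      have hzero : F i (k i + 1) - F i (k i) = 0 := by
        rw [hFexact i (k i + 1) (by omega), hFexact i (k i) (by omega), sub_self]
      rw [Finset.prod_eq_zero (mem_univ i) hzero, mul_zero]
  rw [hrestrict, hS]
  rw [← Finset.prod_univ_sum (fun i => Finset.range (p i + 1)) (fun i j => F i (j + 1) - F i j)]
  refine Finset.prod_congr rfl fun i _ => ?_
  rw [Finset.sum_range_sub (fun j => F i j) (p i + 1), hF0 i, sub_zero]
  exact hFexact i (p i + 1) le_rfl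
end
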